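/- arXiv:2205.12804 — 7 statements merged into one kernel-verified Lean document; each statement's English description precedes it below -/
import Mathlib

section
/- Fix an integer K ≥ 2. The image p(R_K) of R_K under the mapping p is exactly the open interval (0, 2/3); in particular, for every t ∈ (0, 2/3) there exists r ∈ R_K with p(r) = t. -/
/-!
Indices are shifted by one: `r 0` is the paper's `r₁`. Since every `r k` lies in `(0, 1)`, the sum
`S = ∑_{k ≥ 1} r k / (1 - r k)` is positive, so `2 / (3 + S) ∈ (0, 2/3)`. Conversely, for `S > 0`
take `r 1 = a`, `r 2 = ⋯ = r (K-1) = ε` and `r 0 = 1 - a - (K - 2) ε`. As `x ↦ x / (1 - x)` maps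
`(0, 1)` onto `(0, ∞)` with inverse `y ↦ y / (1 + y)`, one can prescribe the contribution `y` of
each small entry and let `r 1` carry the rest `S - (K - 2) y`; for `y` small enough, `ε ≤ a` and
`r 0 > 0`.
-/

open Finset

def stepSeq (x₀ a ε : ℝ) : ℕ → ℝ
  | 0 => x₀
  | 1 => a
  | _ + 2 => ε

section stepSeq

variable {x₀ a ε : ℝ}

theorem stepSeq_mem {s : Set ℝ} (h₀ : x₀ ∈ s) (ha : a ∈ s) (hε : ε ∈ s) (k : ℕ) :
    stepSeq x₀ a ε k ∈ s := by
  rcases k with _ | _ | _ <;> assumption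

theorem stepSeq_le_of_one_le (hεa : ε ≤ a) {i j : ℕ} (hi : 1 ≤ i) (hij : i ≤ j) :
    stepSeq x₀ a ε j ≤ stepSeq x₀ a ε i := by
  obtain _ | _ | i := i
  · omega
  · obtain _ | _ | j := j
    exacts [absurd hij (by omega), le_rfl, hεa]
  · obtain _ | _ | j := j
    exacts [absurd hij (by omega), absurd hij (by omega), le_rfl]

theorem sum_Ico_one_comp_stepSeq (g : ℝ → ℝ) {K : ℕ} (hK : 2 ≤ K) :
    ∑ k ∈ Ico 1 K, g (stepSeq x₀ a ε k) = g a + (K - 2 : ℕ) * g ε := by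
  have htail : ∀ k ∈ Ico 2 K, g (stepSeq x₀ a ε k) = g ε := by
    intro k hk
    obtain ⟨j, rfl⟩ := Nat.exists_eq_add_of_le' (mem_Ico.mp hk).1
    rfl
  rw [sum_eq_sum_Ico_succ_bot (by omega), sum_congr rfl htail, sum_const, Nat.card_Ico,
    nsmul_eq_mul]
  rfl

theorem sum_range_stepSeq {K : ℕ} (hK : 2 ≤ K) :
    ∑ k ∈ range K, stepSeq x₀ a ε k = x₀ + a + (K - 2 : ℕ) * ε := by
  rw [range_eq_Ico, sum_eq_sum_Ico_succ_bot (by omega), zero_add,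
    sum_Ico_one_comp_stepSeq (fun x => x) hK, add_assoc]
  rfl

end stepSeq

theorem div_one_add_div_one_sub_div_one_add {y : ℝ} (hy : 1 + y ≠ 0) :
    y / (1 + y) / (1 - y / (1 + y)) = y := by
  field_simp
  ring

theorem exists_div_one_sub_add_nat_mul_eq (n : ℕ) {S : ℝ} (hS : 0 < S) :
    ∃ a ε : ℝ, 0 < ε ∧ ε ≤ a ∧ a + n * ε < 1 ∧ a / (1 - a) + n * (ε / (1 - ε)) = S := by
  -- `(n + 1) y < S` will give `ε ≤ a`, and `n y < 1 / (1 + S)` will give `a + n ε < 1`.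
  set y := min S (1 / (1 + S)) / (n + 2) with hy
  set z := S - n * y
  have hy0 : 0 < y := by positivity
  have hyS : (n + 1) * y < S := by
    rw [hy, ← mul_div_assoc, div_lt_iff₀ (by positivity)]
    nlinarith [min_le_left S (1 / (1 + S))]
  have hny : n * y < 1 / (1 + S) := by
    rw [hy, ← mul_div_assoc, div_lt_iff₀ (by positivity)]
    have : 0 < 1 / (1 + S) := by positivity
    nlinarith [min_le_right S (1 / (1 + S)), lt_min hS this]
  have hyz : y ≤ z := by linarith
  have hz0 : 0 ≤ z := by linarith
  refine ⟨z / (1 + z), y / (1 + y), by positivity, ?_, ?_, ?_⟩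
  · rw [div_le_div_iff₀ (by positivity) (by positivity)]
    nlinarith
  · have hε : n * (y / (1 + y)) ≤ n * y :=
      mul_le_mul_of_nonneg_left (div_le_self hy0.le (by linarith)) n.cast_nonneg
    have hSz : 1 / (1 + S) ≤ 1 / (1 + z) :=
      one_div_le_one_div_of_le (by positivity) (by nlinarith [n.cast_nonneg (α := ℝ)])
    have hz : z / (1 + z) = 1 - 1 / (1 + z) := by field_simp; ring
    linarith
  · rw [div_one_add_div_one_sub_div_one_add (by positivity),
      div_one_add_div_one_sub_div_one_add (by positivity)]
    ring

theorem two_div_three_add_mem_Ioo {s : ℝ} (hs : 0 < s) : 2 / (3 + s) ∈ Set.Ioo (0 : ℝ) (2 / 3) :=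
  ⟨by positivity, by rw [div_lt_div_iff₀ (by positivity) (by norm_num)]; linarith⟩

/-- The image `p(R_K)` of `R_K` under the mapping `p` is exactly the open interval
`(0, 2/3)` (names indexed by `0, 1, …, K-1`, with `n₁` corresponding to index `0`). -/
theorem image_p_RK_eq_Ioo
    (K : ℕ) (hK : 2 ≤ K) :
    {t : ℝ | ∃ r : ℕ → ℝ,
        (∀ k < K, r k ∈ Set.Ioo (0 : ℝ) 1) ∧
        (∑ k ∈ Finset.range K, r k = 1) ∧
        (∀ i j, 1 ≤ i → i ≤ j → j < K → r j ≤ r i) ∧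
        t = 2 / (3 + ∑ k ∈ Finset.Ico 1 K, r k / (1 - r k))}
      = Set.Ioo (0 : ℝ) (2 / 3) := by
  ext t
  constructor
  · rintro ⟨r, hr, -, -, rfl⟩
    refine two_div_three_add_mem_Ioo (sum_pos (fun k hk => ?_) ⟨1, mem_Ico.mpr ⟨le_rfl, hK⟩⟩)
    obtain ⟨hr0, hr1⟩ := hr k (mem_Ico.mp hk).2
    exact div_pos hr0 (by linarith)
  · rintro ⟨ht0, ht⟩
    have hS : 0 < 2 / t - 3 := by rw [sub_pos, lt_div_iff₀ ht0]; linarith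
    obtain ⟨a, ε, hε, hεa, hsmall, hsum⟩ := exists_div_one_sub_add_nat_mul_eq (K - 2) hS
    have hnε : 0 ≤ ((K - 2 : ℕ) : ℝ) * ε := by positivity
    refine ⟨stepSeq (1 - a - (K - 2 : ℕ) * ε) a ε, fun k _ => stepSeq_mem (s := Set.Ioo 0 1)
        ⟨by linarith, by linarith⟩ ⟨by linarith, by linarith⟩ ⟨hε, by linarith⟩ k, ?_,
      fun i j hi hij _ => stepSeq_le_of_one_le hεa hi hij, ?_⟩
    · rw [sum_range_stepSeq hK]
      ring
    · rw [sum_Ico_one_comp_stepSeq (fun x => x / (1 - x)) hK, hsum]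
      field_simp
      ring
end

section
/- Fix an integer K > 2 and r₁ ∈ (0,1). For every r ∈ R_K(r₁), one has the strict lower bound p(r) > 2r₁/(2r₁ + 1). -/
/-!
Clearing denominators, the bound is equivalent to `r₁ · Σ_{k ≥ 2} r_k/(1 - r_k) < 1 - r₁ = Σ_{k ≥ 2} r_k`,
which holds term by term: since `K > 2`, some third weight is positive, so `r₁ + r_k < 1`, i.e.
`r₁ · r_k/(1 - r_k) < r_k`.
-/

open Finset

variable {ι : Type*} {f : ι → ℝ} {s : Finset ι}

theorem Finset.add_lt_one_of_sum_eq_one [DecidableEq ι] (hcard : 2 < #s) (hpos : ∀ k ∈ s, 0 < f k)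
    (hsum : ∑ k ∈ s, f k = 1) {i j : ι} (hi : i ∈ s) (hj : j ∈ s) (hij : i ≠ j) :
    f i + f j < 1 := by
  obtain ⟨l, hl, hlij⟩ : ∃ l ∈ s, l ∉ ({i, j} : Finset ι) := by
    by_contra! h
    have := card_le_card (show s ⊆ {i, j} from h)
    have := card_le_two (a := i) (b := j)
    omega
  rw [← sum_pair hij, ← hsum]
  exact sum_lt_sum_of_subset (by simp [insert_subset_iff, hi, hj]) hl hlij (hpos l hl)
    fun k hk _ ↦ (hpos k hk).le

theorem Finset.mul_sum_div_one_sub_lt_sum (hs : s.Nonempty) {a : ℝ} (ha : 0 ≤ a)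
    (h : ∀ k ∈ s, 0 < f k ∧ a + f k < 1) :
    a * ∑ k ∈ s, f k / (1 - f k) < ∑ k ∈ s, f k := by
  rw [mul_sum]
  refine sum_lt_sum_of_nonempty hs fun k hk ↦ ?_
  obtain ⟨hpos, hlt⟩ := h k hk
  rw [← mul_div_assoc, div_lt_iff₀ (by linarith)]
  nlinarith

theorem two_mul_div_two_mul_add_one_lt {a S : ℝ} (ha : 0 < a) (hS : 0 ≤ S)
    (h : a * S < 1 - a) : 2 * a / (2 * a + 1) < 2 / (3 + S) := by
  rw [div_lt_div_iff₀ (by linarith) (by linarith)]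
  linarith

theorem p_gt_lower_bound_general
    (K : ℕ) (hK : 2 < K) (r1 : ℝ)
    (r : ℕ → ℝ)
    (hr : ∀ k < K, r k ∈ Set.Ioo (0 : ℝ) 1)
    (hsum : ∑ k ∈ Finset.range K, r k = 1)
    (hfirst : r 0 = r1) :
    2 * r1 / (2 * r1 + 1) < 2 / (3 + ∑ k ∈ Finset.Ico 1 K, r k / (1 - r k)) := by
  subst hfirst
  have hr0 : 0 < r 0 := (hr 0 (by omega)).1
  have hrest : ∑ k ∈ Ico 1 K, r k = 1 - r 0 := by
    rw [← hsum, sum_range_eq_add_Ico _ (by omega)]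
    ring
  have hpair : ∀ k ∈ Ico 1 K, 0 < r k ∧ r 0 + r k < 1 := fun k hk ↦ by
    rw [mem_Ico] at hk
    exact ⟨(hr k hk.2).1, add_lt_one_of_sum_eq_one (by simpa) (fun k hk ↦ (hr k (mem_range.mp hk)).1)
      hsum (mem_range.mpr (by omega)) (mem_range.mpr hk.2) (by omega)⟩
  apply two_mul_div_two_mul_add_one_lt hr0
  · refine sum_nonneg fun k hk ↦ ?_
    obtain ⟨hk0, hk1⟩ := hpair k hk
    exact div_nonneg hk0.le (by linarith)
  · rw [← hrest]
    exact mul_sum_div_one_sub_lt_sum (nonempty_Ico.mpr (by omega)) hr0.le hpair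

/-- For `K > 2` and `r ∈ R_K(r₁)`, one has the strict lower bound
`p(r) > 2r₁/(2r₁+1)` (names indexed by `0, …, K-1`, with `n₁` corresponding to index `0`). -/
theorem p_gt_lower_bound
    (K : ℕ) (hK : 2 < K) (r1 : ℝ) (hr1 : r1 ∈ Set.Ioo (0 : ℝ) 1)
    (r : ℕ → ℝ)
    (hr : ∀ k < K, r k ∈ Set.Ioo (0 : ℝ) 1)
    (hsum : ∑ k ∈ Finset.range K, r k = 1)
    (hmono : ∀ i j, 1 ≤ i → i ≤ j → j < K → r j ≤ r i)
    (hfirst : r 0 = r1) :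
    2 * r1 / (2 * r1 + 1) < 2 / (3 + ∑ k ∈ Finset.Ico 1 K, r k / (1 - r k)) :=
  p_gt_lower_bound_general K hK r1 r hr hsum hfirst
end

section
/- Fix an integer K > 2 and r₁ ∈ (0,1). For every r ∈ R_K(r₁), one has the upper bound p(r) ≤ 2(K − 2 + r₁) / (4(K − 2 + r₁) + 1 − K·r₁). -/
/-!
Write `x / (1 - x) = 1 / (1 - x) - 1`. By the Cauchy–Schwarz inequality in Sedrakyan's form,
`∑ 1 / (1 - r k) ≥ n² / ∑ (1 - r k)` for the `n = K - 1` shares `r k` with `k ≥ 1`, whose sum is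
`1 - r₁`; so the sum in `p(r)` is at least its value `(K - 1)(1 - r₁) / (K - 2 + r₁)` at equal
shares, and `p(r)` is at most the value of `p` there.
-/

open Finset

theorem Finset.card_mul_sum_div_card_sub_sum_le_sum_div_one_sub {ι R : Type*} [Field R]
    [LinearOrder R] [IsStrictOrderedRing R] (s : Finset ι) {x : ι → R}
    (hx : ∀ i ∈ s, x i < 1) :
    #s * (∑ i ∈ s, x i) / (#s - ∑ i ∈ s, x i) ≤ ∑ i ∈ s, x i / (1 - x i) := by
  rcases s.eq_empty_or_nonempty with rfl | hs
  · simp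
  have hgap : ∀ i ∈ s, 0 < 1 - x i := fun i hi ↦ sub_pos.mpr (hx i hi)
  have hdenom : ∑ i ∈ s, (1 - x i) = #s - ∑ i ∈ s, x i := by
    rw [sum_sub_distrib, sum_const, nsmul_one]
  have hdenom_pos : 0 < (#s : R) - ∑ i ∈ s, x i := hdenom ▸ sum_pos hgap hs
  have titu := sq_sum_div_le_sum_sq_div s (fun _ ↦ (1 : R)) hgap
  have hsplit : ∑ i ∈ s, x i / (1 - x i) = ∑ i ∈ s, 1 / (1 - x i) - #s := by
    rw [eq_sub_iff_add_eq, ← nsmul_one, ← sum_const, ← sum_add_distrib]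
    refine sum_congr rfl fun i hi ↦ ?_
    field_simp [(hgap i hi).ne']
    ring
  simp only [sum_const, nsmul_one, one_pow, hdenom] at titu
  rw [hsplit, le_sub_iff_add_le, div_add' _ _ _ hdenom_pos.ne']
  convert titu using 2
  ring

theorem p_le_upper_bound_general
    (K : ℕ) (hK : 2 < K) (r1 : ℝ) (hr1 : r1 ∈ Set.Ioo (0 : ℝ) 1)
    (r : ℕ → ℝ)
    (hr : ∀ k < K, r k ∈ Set.Ioo (0 : ℝ) 1)
    (hsum : ∑ k ∈ Finset.range K, r k = 1)
    (hfirst : r 0 = r1) :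
    2 / (3 + ∑ k ∈ Finset.Ico 1 K, r k / (1 - r k))
      ≤ 2 * ((K : ℝ) - 2 + r1) / (4 * ((K : ℝ) - 2 + r1) + 1 - (K : ℝ) * r1) := by
  obtain ⟨hr1_pos, hr1_lt⟩ := hr1
  have hK3 : (3 : ℝ) ≤ K := by exact_mod_cast hK
  have hrest : ∑ k ∈ Ico 1 K, r k = 1 - r1 := by
    rw [range_eq_Ico, sum_eq_sum_Ico_succ_bot (by omega), hfirst] at hsum
    linarith
  have hcard : (#(Ico 1 K) : ℝ) = K - 1 := by
    rw [Nat.card_Ico, Nat.cast_sub (by omega), Nat.cast_one]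
  have hbound := card_mul_sum_div_card_sub_sum_le_sum_div_one_sub (Ico 1 K)
    (x := r) fun k hk ↦ (hr k (mem_Ico.mp hk).2).2
  rw [hrest, hcard, show (K : ℝ) - 1 - (1 - r1) = K - 2 + r1 by ring] at hbound
  have hmid_pos : 0 < 3 + (K - 1) * (1 - r1) / ((K : ℝ) - 2 + r1) := by
    have : 0 < (K - 1) * (1 - r1) / ((K : ℝ) - 2 + r1) := by
      apply div_pos <;> nlinarith
    linarith
  calc 2 / (3 + ∑ k ∈ Ico 1 K, r k / (1 - r k))
      ≤ 2 / (3 + (K - 1) * (1 - r1) / ((K : ℝ) - 2 + r1)) := by gcongr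
    _ = 2 * ((K : ℝ) - 2 + r1) / (4 * ((K : ℝ) - 2 + r1) + 1 - K * r1) := by
      have : (K : ℝ) - 2 + r1 ≠ 0 := by linarith
      field_simp
      ring

/-- For `K > 2` and `r ∈ R_K(r₁)`, one has the upper bound
`p(r) ≤ 2(K−2+r₁)/(4(K−2+r₁)+1−K·r₁)` (names indexed by `0, …, K-1`,
with `n₁` corresponding to index `0`). -/
theorem p_le_upper_bound
    (K : ℕ) (hK : 2 < K) (r1 : ℝ) (hr1 : r1 ∈ Set.Ioo (0 : ℝ) 1)
    (r : ℕ → ℝ)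
    (hr : ∀ k < K, r k ∈ Set.Ioo (0 : ℝ) 1)
    (hsum : ∑ k ∈ Finset.range K, r k = 1)
    (hmono : ∀ i j, 1 ≤ i → i ≤ j → j < K → r j ≤ r i)
    (hfirst : r 0 = r1) :
    2 / (3 + ∑ k ∈ Finset.Ico 1 K, r k / (1 - r k))
      ≤ 2 * ((K : ℝ) - 2 + r1) / (4 * ((K : ℝ) - 2 + r1) + 1 - (K : ℝ) * r1) :=
  p_le_upper_bound_general K hK r1 hr1 r hr hsum hfirst
end

section
/- Fix an integer K > 2 and r₁ ∈ (0,1). The configuration r = (r₁, (1 − r₁)/(K − 1), …, (1 − r₁)/(K − 1)) belongs to R_K(r₁) and achieves the upper bound: p(r) = 2(K − 2 + r₁) / (4(K − 2 + r₁) + 1 − K·r₁). -/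
/-! The tail of the configuration is constant, equal to `a = (1 - r₁)/(K - 1)`, so every sum over
the tail is `K - 1` times its summand at `a`; the tail sums to `1 - r₁`, and
`(K - 1) · a/(1 - a) = (K - 1)(1 - r₁)/(K - 2 + r₁)`, which turns `p(r)` into the stated quotient. -/

open Finset

noncomputable section

def uniformTail (K : ℕ) (r1 : ℝ) (k : ℕ) : ℝ :=
  if k = 0 then r1 else (1 - r1) / ((K : ℝ) - 1)

namespace uniformTail

variable {K : ℕ} {r1 : ℝ}

@[simp]
lemma apply_zero : uniformTail K r1 0 = r1 := if_pos rfl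

lemma apply_of_ne_zero {k : ℕ} (hk : k ≠ 0) : uniformTail K r1 k = (1 - r1) / ((K : ℝ) - 1) :=
  if_neg hk

lemma sum_Ico_one (hK : 1 ≤ K) (g : ℝ → ℝ) :
    ∑ k ∈ Ico 1 K, g (uniformTail K r1 k) = ((K : ℝ) - 1) * g ((1 - r1) / ((K : ℝ) - 1)) := by
  rw [sum_congr rfl fun k hk => by rw [apply_of_ne_zero (by grind)], sum_const, Nat.card_Ico,
    nsmul_eq_mul, Nat.cast_sub hK, Nat.cast_one]

lemma tail_mem_Ioo (hK : 1 < K) (hr1 : r1 ∈ Set.Ioo (0 : ℝ) 1) :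
    (1 - r1) / ((K : ℝ) - 1) ∈ Set.Ioo (0 : ℝ) 1 := by
  have hK2 : (2 : ℝ) ≤ K := by exact_mod_cast hK
  have hK1 : (0 : ℝ) < (K : ℝ) - 1 := by linarith
  obtain ⟨h0, h1⟩ := hr1
  exact ⟨div_pos (by linarith) hK1, (div_lt_one hK1).2 (by linarith)⟩

lemma mem_Ioo (hK : 1 < K) (hr1 : r1 ∈ Set.Ioo (0 : ℝ) 1) (k : ℕ) :
    uniformTail K r1 k ∈ Set.Ioo (0 : ℝ) 1 := by
  rcases eq_or_ne k 0 with rfl | hk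
  · simpa using hr1
  · simpa [apply_of_ne_zero hk] using tail_mem_Ioo hK hr1

lemma sum_range (hK : 1 < K) : ∑ k ∈ range K, uniformTail K r1 k = 1 := by
  have hK1 : (K : ℝ) - 1 ≠ 0 := sub_ne_zero.2 (by exact_mod_cast hK.ne')
  have htail := sum_Ico_one (r1 := r1) hK.le id
  simp only [id] at htail
  rw [range_eq_Ico, ← sum_Ico_consecutive _ (Nat.zero_le 1) hK.le, htail, mul_div_cancel₀ _ hK1]
  simp

lemma antitone_tail {i j : ℕ} (hi : 1 ≤ i) (hij : i ≤ j) :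
    uniformTail K r1 j ≤ uniformTail K r1 i := by
  rw [apply_of_ne_zero (by omega), apply_of_ne_zero (by omega)]

lemma two_div_three_add_sum_div_one_sub (hK : 1 < K) (hr1 : r1 ∈ Set.Ioo (0 : ℝ) 1) :
    2 / (3 + ∑ k ∈ Ico 1 K, uniformTail K r1 k / (1 - uniformTail K r1 k))
      = 2 * ((K : ℝ) - 2 + r1) / (4 * ((K : ℝ) - 2 + r1) + 1 - (K : ℝ) * r1) := by
  rw [sum_Ico_one hK.le fun x => x / (1 - x)]
  have hK2 : (2 : ℝ) ≤ K := by exact_mod_cast hK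
  have hK1 : (K : ℝ) - 1 ≠ 0 := by linarith
  have hd : (K : ℝ) - 2 + r1 ≠ 0 := by linarith [hr1.1]
  have h1a : 1 - (1 - r1) / ((K : ℝ) - 1) = ((K : ℝ) - 2 + r1) / ((K : ℝ) - 1) := by
    field_simp; ring
  rw [h1a, div_div_div_cancel_right₀ hK1]
  have hden : 4 * ((K : ℝ) - 2 + r1) + 1 - (K : ℝ) * r1 ≠ 0 := by nlinarith [hr1.1, hr1.2]
  field_simp
  ring

end uniformTail

end

/-- For `K > 2` and `r₁ ∈ (0,1)`, the configuration
`r = (r₁, (1−r₁)/(K−1), …, (1−r₁)/(K−1))` belongs to `R_K(r₁)` and achieves the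
upper bound `p(r) = 2(K−2+r₁)/(4(K−2+r₁)+1−K·r₁)` (names indexed by `0, …, K-1`). -/
theorem uniform_tail_achieves_upper_bound
    (K : ℕ) (hK : 2 < K) (r1 : ℝ) (hr1 : r1 ∈ Set.Ioo (0 : ℝ) 1) :
    (∀ k < K, (if k = 0 then r1 else (1 - r1) / ((K : ℝ) - 1)) ∈ Set.Ioo (0 : ℝ) 1) ∧
    (∑ k ∈ Finset.range K, (if k = 0 then r1 else (1 - r1) / ((K : ℝ) - 1)) = 1) ∧
    (∀ i j : ℕ, 1 ≤ i → i ≤ j → j < K →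
      (if j = 0 then r1 else (1 - r1) / ((K : ℝ) - 1))
        ≤ (if i = 0 then r1 else (1 - r1) / ((K : ℝ) - 1))) ∧
    2 / (3 + ∑ k ∈ Finset.Ico 1 K,
        (if k = 0 then r1 else (1 - r1) / ((K : ℝ) - 1))
          / (1 - (if k = 0 then r1 else (1 - r1) / ((K : ℝ) - 1))))
      = 2 * ((K : ℝ) - 2 + r1) / (4 * ((K : ℝ) - 2 + r1) + 1 - (K : ℝ) * r1) := by
  have hK1 : 1 < K := by omega
  exact ⟨fun k _ => uniformTail.mem_Ioo hK1 hr1 k, uniformTail.sum_range hK1,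
    fun _ _ hi hij _ => uniformTail.antitone_tail hi hij,
    uniformTail.two_div_three_add_sum_div_one_sub hK1 hr1⟩
end

section
/- Fix an integer K > 2 and r₁ ∈ (0,1). The image of R_K(r₁) under p is exactly the half-open interval p(R_K(r₁)) = ( 2r₁/(2r₁ + 1), 2(K − 2 + r₁)/(4(K − 2 + r₁) + 1 − K·r₁) ]. -/
/-!
Write `s = 1 - r₁` for the mass shared by the `n = K - 1` tail entries. Their sum
`S = ∑ x / (1 - x)` satisfies `n s / (n - s) ≤ S` by Titu's lemma (equality for equal entries),
and `S < s / (1 - s)` because each entry is strictly smaller than `s`. Conversely, along the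
antitone tail `(s - (n - 1) e, e, …, e)` the sum moves continuously from `s / (1 - s)` at `e = 0`
to `n s / (n - s)` at `e = s / n`, so every value in between is attained. Finally `S ↦ 2 / (3 + S)`
maps `[n s / (n - s), s / (1 - s))` decreasingly onto the stated interval.
-/

open Finset

section SumDivOneSub

variable {ι : Type*} (T : Finset ι) (x : ι → ℝ)

lemma card_mul_sum_div_le_sum_div_one_sub (hx : ∀ i ∈ T, x i < 1) :
    #T * (∑ i ∈ T, x i) / (#T - ∑ i ∈ T, x i) ≤ ∑ i ∈ T, x i / (1 - x i) := by
  rcases T.eq_empty_or_nonempty with rfl | hT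
  · simp
  have hpos : ∀ i ∈ T, 0 < 1 - x i := fun i hi => sub_pos.2 (hx i hi)
  have hgap : 0 < (#T : ℝ) - ∑ i ∈ T, x i := by
    have := sum_pos hpos hT
    rwa [sum_sub_distrib, sum_const, nsmul_one] at this
  have titu := sq_sum_div_le_sum_sq_div T (fun _ => (1 : ℝ)) hpos
  simp only [sum_const, nsmul_one, one_pow, sum_sub_distrib] at titu
  calc #T * (∑ i ∈ T, x i) / (#T - ∑ i ∈ T, x i)
      = (#T : ℝ) ^ 2 / (#T - ∑ i ∈ T, x i) - #T := by field_simp; ring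
    _ ≤ ∑ i ∈ T, 1 / (1 - x i) - #T := by gcongr
    _ = ∑ i ∈ T, x i / (1 - x i) := by
      rw [← nsmul_one, ← sum_const, ← sum_sub_distrib]
      refine sum_congr rfl fun i hi => ?_
      field_simp [(hpos i hi).ne']
      ring

lemma sum_div_one_sub_lt_of_one_lt_card (hT : 1 < #T) (hx : ∀ i ∈ T, 0 < x i)
    (hs : ∑ i ∈ T, x i < 1) :
    ∑ i ∈ T, x i / (1 - x i) < (∑ i ∈ T, x i) / (1 - ∑ i ∈ T, x i) := by
  have hlt : ∀ i ∈ T, x i < ∑ j ∈ T, x j := fun i hi => by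
    obtain ⟨j, hj, hji⟩ := exists_mem_ne hT i
    exact single_lt_sum hji hi hj (hx j hj) fun k hk _ => (hx k hk).le
  calc ∑ i ∈ T, x i / (1 - x i)
      < ∑ i ∈ T, x i / (1 - ∑ j ∈ T, x j) :=
        sum_lt_sum_of_nonempty (card_pos.1 (by omega)) fun i hi =>
          div_lt_div_of_pos_left (hx i hi) (by linarith) (by linarith [hlt i hi])
    _ = (∑ i ∈ T, x i) / (1 - ∑ i ∈ T, x i) := by rw [sum_div]

end SumDivOneSub

lemma exists_two_level_sum_eq {n s S : ℝ} (hn : 1 ≤ n) (hs0 : 0 < s) (hs1 : s < 1)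
    (hS : S ∈ Set.Ico (n * s / (n - s)) (s / (1 - s))) :
    ∃ e ∈ Set.Ioc 0 (s / n),
      (s - (n - 1) * e) / (1 - (s - (n - 1) * e)) + (n - 1) * (e / (1 - e)) = S := by
  set g : ℝ → ℝ := fun e =>
    (s - (n - 1) * e) / (1 - (s - (n - 1) * e)) + (n - 1) * (e / (1 - e)) with hg
  have hsn : s / n ≤ s := div_le_self hs0.le hn
  have hg0 : g 0 = s / (1 - s) := by simp [hg]
  have hgsn : g (s / n) = n * s / (n - s) := by
    have hn0 : n ≠ 0 := by positivity
    have hns : n - s ≠ 0 := by linarith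
    have hlast : s - (n - 1) * (s / n) = s / n := by field_simp; ring
    have hodds : s / n / (1 - s / n) = s / (n - s) := by field_simp
    simp only [hg, hlast, hodds]
    ring
  have hcont : ContinuousOn g (Set.Icc 0 (s / n)) := by
    refine ContinuousOn.add (ContinuousOn.div (by fun_prop) (by fun_prop) fun e he => ?_)
      (continuousOn_const.mul (ContinuousOn.div (by fun_prop) (by fun_prop) fun e he => ?_))
    · nlinarith [he.1, he.2]
    · linarith [he.2]
  obtain ⟨e, ⟨he0, hen⟩, rfl⟩ :=
    intermediate_value_Icc' (by positivity) hcont (by rw [hg0, hgsn]; exact ⟨hS.1, hS.2.le⟩)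
  refine ⟨e, ⟨he0.lt_of_ne ?_, hen⟩, rfl⟩
  rintro rfl
  exact hS.2.ne hg0

def threeStep (a b c : ℝ) (k : ℕ) : ℝ := if k = 0 then a else if k = 1 then b else c

lemma sum_Ico_one_threeStep (f : ℝ → ℝ) (a b c : ℝ) {K : ℕ} (hK : 2 ≤ K) :
    ∑ k ∈ Ico 1 K, f (threeStep a b c k) = f b + ((K : ℝ) - 2) * f c := by
  rw [sum_eq_sum_Ico_succ_bot (by omega), sum_congr rfl fun k hk => by
    rw [threeStep, if_neg (by simp at hk; omega), if_neg (by simp at hk; omega)]]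
  simp [threeStep, hK]

lemma sum_Ico_one_div_one_sub_mem_Ico {K : ℕ} (hK : 2 < K) {r : ℕ → ℝ}
    (hr : ∀ k < K, r k ∈ Set.Ioo 0 1) (hsum : ∑ k ∈ range K, r k = 1) :
    ∑ k ∈ Ico 1 K, r k / (1 - r k) ∈
      Set.Ico (((K : ℝ) - 1) * (1 - r 0) / (K - 2 + r 0)) ((1 - r 0) / r 0) := by
  have hrest : ∑ k ∈ Ico 1 K, r k = 1 - r 0 := by
    rw [sum_range_eq_add_Ico _ (by omega)] at hsum
    linarith
  have hcard : ((#(Ico 1 K) : ℕ) : ℝ) = K - 1 := by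
    rw [Nat.card_Ico, Nat.cast_sub (by omega), Nat.cast_one]
  have hmem : ∀ k ∈ Ico 1 K, r k ∈ Set.Ioo 0 1 := fun k hk => hr k (mem_Ico.1 hk).2
  have hr0 := hr 0 (by omega)
  constructor
  · have h := card_mul_sum_div_le_sum_div_one_sub (Ico 1 K) r fun k hk => (hmem k hk).2
    rwa [hrest, hcard, show (K : ℝ) - 1 - (1 - r 0) = K - 2 + r 0 by ring] at h
  · have h := sum_div_one_sub_lt_of_one_lt_card (Ico 1 K) r (by simp; omega)
      (fun k hk => (hmem k hk).1) (by rw [hrest]; linarith [hr0.1])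
    rwa [hrest, sub_sub_cancel] at h

lemma exists_seq_sum_div_one_sub_eq {K : ℕ} (hK : 2 < K) {r1 S : ℝ} (hr1 : r1 ∈ Set.Ioo 0 1)
    (hS : S ∈ Set.Ico (((K : ℝ) - 1) * (1 - r1) / (K - 2 + r1)) ((1 - r1) / r1)) :
    ∃ r : ℕ → ℝ, (∀ k < K, r k ∈ Set.Ioo 0 1) ∧ (∑ k ∈ range K, r k = 1) ∧
      (∀ i j, 1 ≤ i → i ≤ j → j < K → r j ≤ r i) ∧ r 0 = r1 ∧
      S = ∑ k ∈ Ico 1 K, r k / (1 - r k) := by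
  obtain ⟨hr1₀, hr1₁⟩ := hr1
  have hK' : (3 : ℝ) ≤ K := by exact_mod_cast hK
  obtain ⟨e, ⟨he0, hen⟩, hS⟩ := exists_two_level_sum_eq (n := (K : ℝ) - 1) (s := 1 - r1)
    (by linarith) (by linarith) (by linarith) (by convert hS using 3 <;> ring)
  rw [show (K : ℝ) - 1 - 1 = K - 2 by ring] at hS
  have hen' : e * (K - 1) ≤ 1 - r1 := (le_div_iff₀ (by linarith)).1 hen
  have he1 : e < 1 := by nlinarith
  refine ⟨threeStep r1 (1 - r1 - (K - 2) * e) e, fun k hk => ?_, ?_,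
    fun i j hi hij hj => ?_, rfl, ?_⟩
  · unfold threeStep
    split_ifs
    · exact ⟨hr1₀, hr1₁⟩
    · constructor <;> nlinarith
    · exact ⟨he0, he1⟩
  · rw [sum_range_eq_add_Ico _ (by omega),
      sum_Ico_one_threeStep (fun x => x) _ _ _ (by omega : 2 ≤ K)]
    simp only [threeStep, ↓reduceIte]
    ring
  · unfold threeStep
    split_ifs <;> first | omega | linarith
  · rw [sum_Ico_one_threeStep (fun x => x / (1 - x)) _ _ _ (by omega), ← hS]

lemma image_two_div_three_add_Ico {a b : ℝ} (ha : -3 < a) (hb : -3 < b) :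
    (fun S => 2 / (3 + S)) '' Set.Ico a b = Set.Ioc (2 / (3 + b)) (2 / (3 + a)) := by
  ext t
  constructor
  · rintro ⟨S, ⟨haS, hSb⟩, rfl⟩
    dsimp only
    constructor <;> gcongr <;> linarith
  · rintro ⟨hbt, hta⟩
    have ht : 0 < t := lt_trans (div_pos two_pos (by linarith)) hbt
    refine ⟨2 / t - 3, ⟨?_, ?_⟩, by field_simp; ring⟩
    · rw [le_sub_iff_add_le', le_div_iff₀ ht]
      rwa [le_div_iff₀ (by linarith), mul_comm] at hta
    · rw [sub_lt_iff_lt_add', div_lt_iff₀ ht]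
      rwa [div_lt_iff₀ (by linarith), mul_comm] at hbt

/-- For `K > 2` and `r₁ ∈ (0,1)`, the image of `R_K(r₁)` under `p` is exactly the
half-open interval `(2r₁/(2r₁+1), 2(K−2+r₁)/(4(K−2+r₁)+1−K·r₁)]`
(names indexed by `0, …, K-1`, with `n₁` corresponding to index `0`). -/
theorem image_p_RK_r1_eq_Ioc
    (K : ℕ) (hK : 2 < K) (r1 : ℝ) (hr1 : r1 ∈ Set.Ioo (0 : ℝ) 1) :
    {t : ℝ | ∃ r : ℕ → ℝ,
        (∀ k < K, r k ∈ Set.Ioo (0 : ℝ) 1) ∧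
        (∑ k ∈ Finset.range K, r k = 1) ∧
        (∀ i j, 1 ≤ i → i ≤ j → j < K → r j ≤ r i) ∧
        r 0 = r1 ∧
        t = 2 / (3 + ∑ k ∈ Finset.Ico 1 K, r k / (1 - r k))}
      = Set.Ioc (2 * r1 / (2 * r1 + 1))
          (2 * ((K : ℝ) - 2 + r1) / (4 * ((K : ℝ) - 2 + r1) + 1 - (K : ℝ) * r1)) := by
  obtain ⟨hr1₀, hr1₁⟩ := hr1
  have hK' : (3 : ℝ) ≤ K := by exact_mod_cast hK
  have hleft_end : 2 / (3 + (1 - r1) / r1) = 2 * r1 / (2 * r1 + 1) := by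
    field_simp; ring
  have hright_end : 2 / (3 + ((K : ℝ) - 1) * (1 - r1) / (K - 2 + r1)) =
      2 * ((K : ℝ) - 2 + r1) / (4 * ((K : ℝ) - 2 + r1) + 1 - (K : ℝ) * r1) := by
    have : (K : ℝ) - 2 + r1 ≠ 0 := by linarith
    have : (4 : ℝ) * (K - 2 + r1) + 1 - K * r1 ≠ 0 := by nlinarith
    field_simp; ring
  have hlower_pos : 0 < ((K : ℝ) - 1) * (1 - r1) / (K - 2 + r1) := by
    apply div_pos <;> nlinarith
  have hupper_pos : 0 < (1 - r1) / r1 := div_pos (by linarith) hr1₀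
  rw [← hleft_end, ← hright_end, ← image_two_div_three_add_Ico (by linarith) (by linarith)]
  ext t
  constructor
  · rintro ⟨r, hr, hsum, -, rfl, rfl⟩
    exact ⟨_, sum_Ico_one_div_one_sub_mem_Ico hK hr hsum, rfl⟩
  · rintro ⟨S, hS, rfl⟩
    obtain ⟨r, hr, hsum, hanti, hr0, rfl⟩ := exists_seq_sum_div_one_sub_eq hK ⟨hr1₀, hr1₁⟩ hS
    exact ⟨r, hr, hsum, hanti, hr0, rfl⟩
end

section
/- Fix r₁ ∈ (0,1) and for an integer K ≥ 2 set U(K) := 2(K − 2 + r₁)/(4(K − 2 + r₁) + 1 − K·r₁). Then K ↦ U(K) is strictly increasing on the integers K ≥ 2; in particular, the (closures of the) feasible sets p(R_K(r₁)), K = 2, 3, …, form a strictly increasing sequence with respect to inclusion. -/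
lemma U_lt_aux (r1 : ℝ) (h0 : 0 < r1) (h1 : r1 < 1) (K L : ℝ)
    (hK : 2 ≤ K) (hKL : K < L) :
    2 * (K - 2 + r1) / (4 * (K - 2 + r1) + 1 - K * r1)
      < 2 * (L - 2 + r1) / (4 * (L - 2 + r1) + 1 - L * r1) := by
  have hdK : 0 < 4 * (K - 2 + r1) + 1 - K * r1 := by nlinarith
  have hdL : 0 < 4 * (L - 2 + r1) + 1 - L * r1 := by nlinarith
  rw [div_lt_div_iff₀ hdK hdL]
  nlinarith [mul_pos (sub_pos.mpr hKL) (mul_pos (sub_pos.mpr h1) (sub_pos.mpr h1))]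

/-- The upper bound `U(K) = 2(K−2+r₁)/(4(K−2+r₁)+1−K·r₁)` is strictly increasing in the
integer `K ≥ 2`; in particular the closures `[2r₁/(2r₁+1), U(K)]` of the feasible sets
`p(R_K(r₁))` form a strictly increasing sequence with respect to inclusion. -/
theorem upper_bound_strictMono
    (r1 : ℝ) (hr1 : r1 ∈ Set.Ioo (0 : ℝ) 1) :
    (∀ K L : ℕ, 2 ≤ K → K < L →
      2 * ((K : ℝ) - 2 + r1) / (4 * ((K : ℝ) - 2 + r1) + 1 - (K : ℝ) * r1)
        < 2 * ((L : ℝ) - 2 + r1) / (4 * ((L : ℝ) - 2 + r1) + 1 - (L : ℝ) * r1)) ∧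
    (∀ K L : ℕ, 2 ≤ K → K < L →
      Set.Icc (2 * r1 / (2 * r1 + 1))
          (2 * ((K : ℝ) - 2 + r1) / (4 * ((K : ℝ) - 2 + r1) + 1 - (K : ℝ) * r1))
        ⊂ Set.Icc (2 * r1 / (2 * r1 + 1))
          (2 * ((L : ℝ) - 2 + r1) / (4 * ((L : ℝ) - 2 + r1) + 1 - (L : ℝ) * r1))) := by
  obtain ⟨h0, h1⟩ := hr1
  have key : ∀ K L : ℕ, 2 ≤ K → K < L →
      2 * ((K : ℝ) - 2 + r1) / (4 * ((K : ℝ) - 2 + r1) + 1 - (K : ℝ) * r1)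
        < 2 * ((L : ℝ) - 2 + r1) / (4 * ((L : ℝ) - 2 + r1) + 1 - (L : ℝ) * r1) := by
    intro K L hK hKL
    exact U_lt_aux r1 h0 h1 K L (by exact_mod_cast hK) (by exact_mod_cast hKL)
  refine ⟨key, ?_⟩
  intro K L hK hKL
  have hlow : ∀ M : ℕ, 2 ≤ M →
      2 * r1 / (2 * r1 + 1)
        ≤ 2 * ((M : ℝ) - 2 + r1) / (4 * ((M : ℝ) - 2 + r1) + 1 - (M : ℝ) * r1) := by
    intro M hM
    have h2 : 2 * r1 / (2 * r1 + 1)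
        = 2 * ((2 : ℝ) - 2 + r1) / (4 * ((2 : ℝ) - 2 + r1) + 1 - (2 : ℝ) * r1) := by
      ring_nf
    rcases eq_or_lt_of_le hM with h | h
    · rw [h2, ← h]; norm_num
    · rw [h2]
      exact le_of_lt (U_lt_aux r1 h0 h1 2 M le_rfl (by exact_mod_cast h))
  have hKL' := key K L hK hKL
  constructor
  · exact Set.Icc_subset_Icc_right (le_of_lt hKL')
  · intro hsub
    have hmem : (2 * ((L : ℝ) - 2 + r1) / (4 * ((L : ℝ) - 2 + r1) + 1 - (L : ℝ) * r1))
        ∈ Set.Icc (2 * r1 / (2 * r1 + 1))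
          (2 * ((L : ℝ) - 2 + r1) / (4 * ((L : ℝ) - 2 + r1) + 1 - (L : ℝ) * r1)) :=
      ⟨hlow L (by omega), le_rfl⟩
    exact absurd (hsub hmem).2 (not_le.mpr hKL')
end

section
/- Let K = 3 and let r = (r₁, r₂, r₃) with all coordinates in (0,1), r₁ + r₂ + r₃ = 1 and r₂ ≥ r₃. Then p(r) = 1/2 if and only if 1/3 ≤ r₁ < 1/2, r₂ = (1 − r₁)/2 + √((3r₁ + 1)² − 4)/6 and r₃ = (1 − r₁)/2 − √((3r₁ + 1)² − 4)/6. -/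
/-- For `K = 3` and `r = (r₁, r₂, r₃) ∈ R_3`, one has `p(r) = 1/2` if and only if
`1/3 ≤ r₁ < 1/2`, `r₂ = (1−r₁)/2 + √((3r₁+1)² − 4)/6` and
`r₃ = (1−r₁)/2 − √((3r₁+1)² − 4)/6`. -/
theorem K3_characterization_half
    (r1 r2 r3 : ℝ)
    (h1 : r1 ∈ Set.Ioo (0 : ℝ) 1) (h2 : r2 ∈ Set.Ioo (0 : ℝ) 1)
    (h3 : r3 ∈ Set.Ioo (0 : ℝ) 1)
    (hsum : r1 + r2 + r3 = 1) (hord : r3 ≤ r2) :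
    2 / (3 + r2 / (1 - r2) + r3 / (1 - r3)) = 1 / 2 ↔
      (1 / 3 ≤ r1 ∧ r1 < 1 / 2 ∧
        r2 = (1 - r1) / 2 + Real.sqrt ((3 * r1 + 1) ^ 2 - 4) / 6 ∧
        r3 = (1 - r1) / 2 - Real.sqrt ((3 * r1 + 1) ^ 2 - 4) / 6) := by
  obtain ⟨h1a, h1b⟩ := h1
  obtain ⟨h2a, h2b⟩ := h2
  obtain ⟨h3a, h3b⟩ := h3
  have hb2 : (0:ℝ) < 1 - r2 := by linarith
  have hb3 : (0:ℝ) < 1 - r3 := by linarith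
  have hkey : 2 / (3 + r2 / (1 - r2) + r3 / (1 - r3)) = 1 / 2 ↔
      3 * r2 * r3 = 2 * (r2 + r3) - 1 := by
    have hd : 0 < 3 + r2 / (1 - r2) + r3 / (1 - r3) := by positivity
    rw [div_eq_div_iff hd.ne' (by norm_num : (2:ℝ) ≠ 0)]
    constructor
    · intro h
      field_simp at h
      nlinarith [h]
    · intro h
      field_simp
      nlinarith [h]
  rw [hkey]
  constructor
  · intro h
    have hE : (3 * r1 + 1) ^ 2 - 4 = (3 * (r2 - r3)) ^ 2 := by nlinarith
    have hs : Real.sqrt ((3 * r1 + 1) ^ 2 - 4) = 3 * (r2 - r3) := by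
      rw [hE, Real.sqrt_sq (by linarith)]
    refine ⟨?_, ?_, ?_, ?_⟩
    · nlinarith [sq_nonneg (r2 - r3)]
    · nlinarith [mul_pos h2a h3a]
    · rw [hs]; linarith
    · rw [hs]; linarith
  · rintro ⟨ha, hb, hr2, hr3⟩
    have hE : (0:ℝ) ≤ (3 * r1 + 1) ^ 2 - 4 := by nlinarith
    have hs : Real.sqrt ((3 * r1 + 1) ^ 2 - 4) ^ 2 = (3 * r1 + 1) ^ 2 - 4 :=
      Real.sq_sqrt hE
    nlinarith [hs, hr2, hr3]
end
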